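/- Let A : H_n → R^m satisfy the Frobenius-robust rank null space property with respect to ℓ_q of order r with constants 0 < ρ < 1 and τ > 0. Let W be an invertible positive definite Hermitian n×n matrix with condition number κ(W) = λ_max(W)/λ_min(W) satisfying κ(W)² ρ < 1. Then the map B : H_n → R^m defined by B(X) = A(W^{-1} X W^{-1}) satisfies the Frobenius-robust rank null space property with respect to ℓ_q of order r with constants κ(W)² ρ and ‖W‖_∞² τ, where ‖W‖_∞ = λ_max(W). -/

import Mathlib

open scoped BigOperators
open MeasureTheory Matrix
open scoped ComplexOrder

noncomputable section

namespace RT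

instance {n m : ℕ} : MeasurableSpace (Matrix (Fin n) (Fin m) ℝ) :=
  inferInstanceAs (MeasurableSpace (Fin n → Fin m → ℝ))

/-- the values of a real tuple sorted in nonincreasing order -/
def sortDesc {n : ℕ} (f : Fin n → ℝ) : Fin n → ℝ :=
  fun i => - ((fun j => - f j) ∘ (Tuple.sort (fun j => - f j))) i

/-- singular values of a square complex matrix, in nonincreasing order -/
def singVals {n : ℕ} (M : Matrix (Fin n) (Fin n) ℂ) : Fin n → ℝ :=
  sortDesc (fun i =>
    Real.sqrt ((Matrix.isHermitian_conjTranspose_mul_self M).eigenvalues i))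

/-- `‖M_r‖_F`: Frobenius norm of the `r` largest singular values -/
def headFro {n : ℕ} (M : Matrix (Fin n) (Fin n) ℂ) (r : ℕ) : ℝ :=
  Real.sqrt (∑ i : Fin n, if (i : ℕ) < r then (singVals M i) ^ 2 else 0)

/-- `‖M_{r,c}‖_F`: Frobenius norm of the tail singular values -/
def tailFro {n : ℕ} (M : Matrix (Fin n) (Fin n) ℂ) (r : ℕ) : ℝ :=
  Real.sqrt (∑ i : Fin n, if r ≤ (i : ℕ) then (singVals M i) ^ 2 else 0)

/-- `‖M_r‖_*`: sum of the `r` largest singular values -/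
def headNuc {n : ℕ} (M : Matrix (Fin n) (Fin n) ℂ) (r : ℕ) : ℝ :=
  ∑ i : Fin n, if (i : ℕ) < r then singVals M i else 0

/-- `‖M_{r,c}‖_*`: sum of the singular values beyond the `r` largest -/
def tailNuc {n : ℕ} (M : Matrix (Fin n) (Fin n) ℂ) (r : ℕ) : ℝ :=
  ∑ i : Fin n, if r ≤ (i : ℕ) then singVals M i else 0

/-- nuclear norm -/
def nucNorm {n : ℕ} (M : Matrix (Fin n) (Fin n) ℂ) : ℝ :=
  ∑ i : Fin n, singVals M i

/-- Frobenius norm -/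
def froNorm {n : ℕ} (M : Matrix (Fin n) (Fin n) ℂ) : ℝ :=
  Real.sqrt (∑ i : Fin n, (singVals M i) ^ 2)

/-- `ℓ_q` norm on `ℝ^m` -/
def lqNorm {m : ℕ} (q : ℝ) (v : Fin m → ℝ) : ℝ :=
  (∑ j : Fin m, |v j| ^ q) ^ (1 / q)

/-- the Frobenius-robust rank null space property of order `r` with
constants `ρ`, `τ` with respect to `ℓ_q`, for a map on Hermitian matrices -/
def FrobRobustNSP {n m : ℕ} (A : Matrix (Fin n) (Fin n) ℂ → (Fin m → ℝ))
    (q : ℝ) (r : ℕ) (ρ τ : ℝ) : Prop :=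
  ∀ M : Matrix (Fin n) (Fin n) ℂ, M.IsHermitian →
    headFro M r ≤ (ρ / Real.sqrt r) * tailNuc M r + τ * lqNorm q (A M)

/-- rank one measurement map with real measurement vectors `a j`,
acting on complex Hermitian matrices: `X ↦ (tr(X a_j a_j^*))_j` -/
def measR {n m : ℕ} (a : Fin m → Fin n → ℝ) (X : Matrix (Fin n) (Fin n) ℂ) :
    Fin m → ℝ :=
  fun j => (Matrix.trace (X *
    Matrix.vecMulVec (fun k => (a j k : ℂ)) (fun k => (a j k : ℂ)))).re

/-- rank one measurement map with complex measurement vectors `a j`: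
`X ↦ (tr(X a_j a_j^*))_j` -/
def measC {n m : ℕ} (a : Fin m → Fin n → ℂ) (X : Matrix (Fin n) (Fin n) ℂ) :
    Fin m → ℝ :=
  fun j => (Matrix.trace (X * Matrix.vecMulVec (a j) (star (a j)))).re

/-- largest eigenvalue of a (Hermitian) matrix (junk value `0` otherwise) -/
def eigMax {𝕜 : Type*} [RCLike 𝕜] {n : ℕ} (M : Matrix (Fin n) (Fin n) 𝕜) : ℝ := by
  classical exact if h : M.IsHermitian then ⨆ i, h.eigenvalues i else 0

/-- smallest eigenvalue of a (Hermitian) matrix (junk value `0` otherwise) -/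
def eigMin {𝕜 : Type*} [RCLike 𝕜] {n : ℕ} (M : Matrix (Fin n) (Fin n) 𝕜) : ℝ := by
  classical exact if h : M.IsHermitian then ⨅ i, h.eigenvalues i else 0

/-- positive semidefinite square root (junk value `0` if not psd) -/
def psdSqrt {n : ℕ} (M : Matrix (Fin n) (Fin n) ℝ) : Matrix (Fin n) (Fin n) ℝ := by
  classical exact if h : M.PosSemidef then (h.1.eigenvectorUnitary.1 *
    Matrix.diagonal ((↑) ∘ Real.sqrt ∘ h.1.eigenvalues) *
    (star h.1.eigenvectorUnitary : Matrix (Fin n) (Fin n) ℝ)) else 0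

/-- the law of an `n × m` matrix with i.i.d. standard Gaussian entries -/
def gaussMatrix (n m : ℕ) : Measure (Matrix (Fin n) (Fin m) ℝ) :=
  Measure.pi fun _ : Fin n => Measure.pi fun _ : Fin m =>
    ProbabilityTheory.gaussianReal 0 1

/-- `μ` is the uniform (Haar) distribution on the Stiefel manifold `V_n^m`:
a probability measure carried by `{Q : Qᵀ Q = 1}` which is invariant under
left multiplication by orthogonal matrices. -/
def IsHaarStiefel {m n : ℕ} (μ : Measure (Matrix (Fin m) (Fin n) ℝ)) : Prop :=
  IsProbabilityMeasure μ ∧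
    μ {Q | Qᵀ * Q = 1} = 1 ∧
    ∀ O : Matrix (Fin m) (Fin m) ℝ, Oᵀ * O = 1 →
      Measure.map (fun Q => O * Q) μ = μ

end RT


instance (n m : ℕ) : MeasureTheory.IsProbabilityMeasure (RT.gaussMatrix n m) := by
  unfold RT.gaussMatrix
  exact MeasureTheory.Measure.pi.instIsProbabilityMeasure _


/-
With `N = W⁻¹ M W⁻¹` we have `M = W N W`. By the Courant–Fischer min-max principle,
multiplying a matrix on either side by `S` multiplies each singular value by at most `‖S‖`,
so `σᵢ(M) ≤ λ_max(W)² σᵢ(N)` and `σᵢ(N) ≤ λ_min(W)⁻² σᵢ(M)`. Hence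
`‖M_r‖_F ≤ λ_max(W)² ‖N_r‖_F`, the null space property of `A` bounds `‖N_r‖_F` by
`‖N_{r,c}‖_*` and `‖A N‖_q`, and `‖N_{r,c}‖_* ≤ λ_min(W)⁻² ‖M_{r,c}‖_*`.
-/

open scoped InnerProductSpace

namespace OrthonormalBasis

variable {ι 𝕜 E : Type*} [Fintype ι] [RCLike 𝕜] [NormedAddCommGroup E]
  [InnerProductSpace 𝕜 E]

theorem norm_sq_eq_sum_norm_sq_repr (b : OrthonormalBasis ι 𝕜 E) (x : E) :
    ‖x‖ ^ 2 = ∑ k, ‖b.repr x k‖ ^ 2 := by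
  simp only [b.repr_apply_apply, b.sum_sq_norm_inner_right]

theorem repr_eq_zero_of_mem_span_image (b : OrthonormalBasis ι 𝕜 E) {s : Set ι} {x : E}
    (hx : x ∈ Submodule.span 𝕜 (b '' s)) {k : ι} (hk : k ∉ s) : b.repr x k = 0 := by
  rw [← b.coe_toBasis, b.toBasis.mem_span_image] at hx
  rw [← b.coe_toBasis_repr_apply]
  by_contra h
  exact hk (hx (Finsupp.mem_support_iff.mpr h))

theorem finrank_span_image_finset (b : OrthonormalBasis ι 𝕜 E) (s : Finset ι) :
    Module.finrank 𝕜 (Submodule.span 𝕜 (b '' s)) = s.card := by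
  have hli : LinearIndependent 𝕜 (fun k : (s : Set ι) => b k) :=
    b.orthonormal.linearIndependent.comp _ Subtype.val_injective
  rw [Set.image_eq_range, finrank_span_eq_card hli]
  simp

end OrthonormalBasis

namespace Matrix

variable {ι 𝕜 : Type*} [Fintype ι] [DecidableEq ι] [RCLike 𝕜]

theorem norm_toEuclideanLin_sq (M : Matrix ι ι 𝕜) (x : EuclideanSpace 𝕜 ι) :
    ‖toEuclideanLin M x‖ ^ 2 = RCLike.re ⟪x, toEuclideanLin (Mᴴ * M) x⟫_𝕜 := by
  rw [toLpLin_mul_same, LinearMap.comp_apply, toEuclideanLin_conjTranspose_eq_adjoint,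
    LinearMap.adjoint_inner_right, inner_self_eq_norm_sq]

theorem injective_toEuclideanLin {A : Matrix ι ι 𝕜} (hA : IsUnit A) :
    Function.Injective (toEuclideanLin A) :=
  fun _ _ h => WithLp.ofLp_injective _ (mulVec_injective_iff_isUnit.mpr hA (congrArg WithLp.ofLp h))

namespace IsHermitian

variable {H : Matrix ι ι 𝕜} (hH : H.IsHermitian)

theorem repr_toEuclideanLin (x : EuclideanSpace 𝕜 ι) (j : ι) :
    hH.eigenvectorBasis.repr (toEuclideanLin H x) j
      = hH.eigenvalues j * hH.eigenvectorBasis.repr x j := by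
  have hsymm := isSymmetric_toEuclideanLin_iff.mpr hH
  have hvec : toEuclideanLin H (hH.eigenvectorBasis j)
      = (hH.eigenvalues j : 𝕜) • hH.eigenvectorBasis j := by
    ext k
    simpa [toLpLin_apply] using congrFun (hH.mulVec_eigenvectorBasis j) k
  rw [OrthonormalBasis.repr_apply_apply, OrthonormalBasis.repr_apply_apply,
    ← hsymm, hvec, inner_smul_left, RCLike.conj_ofReal]

theorem norm_toEuclideanLin_sq_eq_sum (x : EuclideanSpace 𝕜 ι) :
    ‖toEuclideanLin H x‖ ^ 2
      = ∑ k, hH.eigenvalues k ^ 2 * ‖hH.eigenvectorBasis.repr x k‖ ^ 2 := by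
  simp only [hH.eigenvectorBasis.norm_sq_eq_sum_norm_sq_repr (toEuclideanLin H x),
    hH.repr_toEuclideanLin, norm_mul, RCLike.norm_ofReal, mul_pow, sq_abs]

theorem re_inner_toEuclideanLin_eq_sum (x : EuclideanSpace 𝕜 ι) :
    RCLike.re ⟪x, toEuclideanLin H x⟫_𝕜
      = ∑ k, hH.eigenvalues k * ‖hH.eigenvectorBasis.repr x k‖ ^ 2 := by
  rw [← hH.eigenvectorBasis.repr.inner_map_map, PiLp.inner_apply, map_sum]
  refine Finset.sum_congr rfl fun k _ => ?_
  rw [hH.repr_toEuclideanLin, RCLike.inner_apply, mul_assoc, RCLike.mul_conj,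
    ← RCLike.ofReal_pow, ← RCLike.ofReal_mul, RCLike.ofReal_re]

theorem mul_norm_sq_le_re_inner_of_mem_span {s : Set ι} {c : ℝ} {x : EuclideanSpace 𝕜 ι}
    (hc : ∀ k ∈ s, c ≤ hH.eigenvalues k)
    (hx : x ∈ Submodule.span 𝕜 (hH.eigenvectorBasis '' s)) :
    c * ‖x‖ ^ 2 ≤ RCLike.re ⟪x, toEuclideanLin H x⟫_𝕜 := by
  rw [hH.re_inner_toEuclideanLin_eq_sum, hH.eigenvectorBasis.norm_sq_eq_sum_norm_sq_repr,
    Finset.mul_sum]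
  refine Finset.sum_le_sum fun k _ => ?_
  by_cases hk : k ∈ s
  · exact mul_le_mul_of_nonneg_right (hc k hk) (sq_nonneg _)
  · simp [hH.eigenvectorBasis.repr_eq_zero_of_mem_span_image hx hk]

theorem re_inner_le_mul_norm_sq_of_mem_span {s : Set ι} {c : ℝ} {x : EuclideanSpace 𝕜 ι}
    (hc : ∀ k ∈ s, hH.eigenvalues k ≤ c)
    (hx : x ∈ Submodule.span 𝕜 (hH.eigenvectorBasis '' s)) :
    RCLike.re ⟪x, toEuclideanLin H x⟫_𝕜 ≤ c * ‖x‖ ^ 2 := by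
  rw [hH.re_inner_toEuclideanLin_eq_sum, hH.eigenvectorBasis.norm_sq_eq_sum_norm_sq_repr,
    Finset.mul_sum]
  refine Finset.sum_le_sum fun k _ => ?_
  by_cases hk : k ∈ s
  · exact mul_le_mul_of_nonneg_right (hc k hk) (sq_nonneg _)
  · simp [hH.eigenvectorBasis.repr_eq_zero_of_mem_span_image hx hk]

theorem norm_toEuclideanLin_le {c : ℝ} (hc0 : 0 ≤ c) (hc : ∀ k, |hH.eigenvalues k| ≤ c)
    (x : EuclideanSpace 𝕜 ι) : ‖toEuclideanLin H x‖ ≤ c * ‖x‖ := by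
  have hsq : ‖toEuclideanLin H x‖ ^ 2 ≤ (c * ‖x‖) ^ 2 := by
    rw [hH.norm_toEuclideanLin_sq_eq_sum, mul_pow,
      hH.eigenvectorBasis.norm_sq_eq_sum_norm_sq_repr, Finset.mul_sum]
    refine Finset.sum_le_sum fun k _ => mul_le_mul_of_nonneg_right ?_ (sq_nonneg _)
    exact sq_le_sq' (neg_le_of_abs_le (hc k)) (le_of_abs_le (hc k))
  exact le_of_sq_le_sq hsq (by positivity)

theorem mul_norm_le_norm_toEuclideanLin {c : ℝ} (hc0 : 0 ≤ c)
    (hc : ∀ k, c ≤ |hH.eigenvalues k|) (x : EuclideanSpace 𝕜 ι) :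
    c * ‖x‖ ≤ ‖toEuclideanLin H x‖ := by
  have hsq : (c * ‖x‖) ^ 2 ≤ ‖toEuclideanLin H x‖ ^ 2 := by
    rw [hH.norm_toEuclideanLin_sq_eq_sum, mul_pow,
      hH.eigenvectorBasis.norm_sq_eq_sum_norm_sq_repr, Finset.mul_sum]
    refine Finset.sum_le_sum fun k _ => mul_le_mul_of_nonneg_right ?_ (sq_nonneg _)
    rw [← sq_abs (hH.eigenvalues k)]
    exact pow_le_pow_left₀ hc0 (hc k) 2
  exact le_of_sq_le_sq hsq (norm_nonneg _)

end IsHermitian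

end Matrix

namespace RT

section Eigenvalues

variable {𝕜 : Type*} [RCLike 𝕜] {n : ℕ} {W : Matrix (Fin n) (Fin n) 𝕜}

theorem eigenvalues_le_eigMax (hW : W.IsHermitian) (k : Fin n) : hW.eigenvalues k ≤ eigMax W := by
  rw [eigMax, dif_pos hW]
  exact le_ciSup (Set.finite_range _).bddAbove k

theorem eigMin_le_eigenvalues (hW : W.IsHermitian) (k : Fin n) : eigMin W ≤ hW.eigenvalues k := by
  rw [eigMin, dif_pos hW]
  exact ciInf_le (Set.finite_range _).bddBelow k

theorem eigMax_nonneg (hW : W.PosSemidef) : 0 ≤ eigMax W := by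
  rw [eigMax, dif_pos hW.1]
  exact Real.iSup_nonneg hW.eigenvalues_nonneg

theorem eigMin_nonneg (hW : W.PosSemidef) : 0 ≤ eigMin W := by
  rw [eigMin, dif_pos hW.1]
  exact Real.iInf_nonneg hW.eigenvalues_nonneg

theorem eigMin_pos [Nonempty (Fin n)] (hW : W.PosDef) : 0 < eigMin W := by
  rw [eigMin, dif_pos hW.1]
  obtain ⟨k, hk⟩ := exists_eq_ciInf_of_finite (f := hW.1.eigenvalues)
  exact hk ▸ hW.eigenvalues_pos k

theorem norm_toEuclideanLin_le_eigMax_mul (hW : W.PosSemidef) (x : EuclideanSpace 𝕜 (Fin n)) :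
    ‖toEuclideanLin W x‖ ≤ eigMax W * ‖x‖ :=
  hW.1.norm_toEuclideanLin_le (eigMax_nonneg hW)
    (fun k => (abs_of_nonneg (hW.eigenvalues_nonneg k)).trans_le (eigenvalues_le_eigMax hW.1 k)) x

theorem eigMin_mul_norm_le_norm_toEuclideanLin (hW : W.PosSemidef)
    (x : EuclideanSpace 𝕜 (Fin n)) : eigMin W * ‖x‖ ≤ ‖toEuclideanLin W x‖ :=
  hW.1.mul_norm_le_norm_toEuclideanLin (eigMin_nonneg hW)
    (fun k => (eigMin_le_eigenvalues hW.1 k).trans (le_abs_self _)) x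

theorem norm_toEuclideanLin_inv_le (hW : W.PosDef) (x : EuclideanSpace 𝕜 (Fin n)) :
    ‖toEuclideanLin W⁻¹ x‖ ≤ (eigMin W)⁻¹ * ‖x‖ := by
  rcases isEmpty_or_nonempty (Fin n) with _ | _
  · simp [Subsingleton.elim x 0]
  rw [inv_mul_eq_div, le_div_iff₀ (eigMin_pos hW), mul_comm]
  calc eigMin W * ‖toEuclideanLin W⁻¹ x‖
        ≤ ‖toEuclideanLin W (toEuclideanLin W⁻¹ x)‖ :=
          eigMin_mul_norm_le_norm_toEuclideanLin hW.posSemidef _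
    _ = ‖x‖ := by
        rw [← LinearMap.comp_apply, ← toLpLin_mul_same,
          mul_nonsing_inv W ((isUnit_iff_isUnit_det W).mp hW.isUnit), toLpLin_one,
          LinearMap.id_apply]

end Eigenvalues

variable {n : ℕ}

theorem sortDesc_apply (f : Fin n → ℝ) (i : Fin n) :
    sortDesc f i = f (Tuple.sort (fun j => -f j) i) := by
  simp [sortDesc]

theorem antitone_sortDesc (f : Fin n → ℝ) : Antitone (sortDesc f) := fun i j hij => by
  simpa [sortDesc_apply] using Tuple.monotone_sort (fun j => -f j) hij

theorem singVals_nonneg (M : Matrix (Fin n) (Fin n) ℂ) (i : Fin n) : 0 ≤ singVals M i := by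
  rw [singVals, sortDesc_apply]
  exact Real.sqrt_nonneg _

theorem antitone_singVals (M : Matrix (Fin n) (Fin n) ℂ) : Antitone (singVals M) :=
  antitone_sortDesc _

theorem exists_perm_singVals_sq (M : Matrix (Fin n) (Fin n) ℂ) :
    ∃ p : Equiv.Perm (Fin n), ∀ j,
      singVals M j ^ 2 = (isHermitian_conjTranspose_mul_self M).eigenvalues (p j) :=
  ⟨_, fun j => by
    rw [singVals, sortDesc_apply,
      Real.sq_sqrt ((posSemidef_conjTranspose_mul_self M).eigenvalues_nonneg _)]⟩

theorem exists_finrank_eq_singVals_mul_norm_le (M : Matrix (Fin n) (Fin n) ℂ) (i : Fin n) :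
    ∃ V : Submodule ℂ (EuclideanSpace ℂ (Fin n)), Module.finrank ℂ V = i + 1 ∧
      ∀ x ∈ V, singVals M i * ‖x‖ ≤ ‖toEuclideanLin M x‖ := by
  have hH := isHermitian_conjTranspose_mul_self M
  obtain ⟨p, hp⟩ := exists_perm_singVals_sq M
  let s := (Finset.Iic i).map p.toEmbedding
  have hs : ∀ k ∈ (s : Set (Fin n)), singVals M i ^ 2 ≤ hH.eigenvalues k := by
    intro k hk
    obtain ⟨j, hj, rfl⟩ := Finset.mem_map.mp hk
    rw [Equiv.toEmbedding_apply, ← hp]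
    exact pow_le_pow_left₀ (singVals_nonneg M i) (antitone_singVals M (Finset.mem_Iic.mp hj)) 2
  refine ⟨Submodule.span ℂ (hH.eigenvectorBasis '' s), ?_, fun x hx => ?_⟩
  · rw [hH.eigenvectorBasis.finrank_span_image_finset, Finset.card_map, Fin.card_Iic]
  · have hsq := hH.mul_norm_sq_le_re_inner_of_mem_span hs hx
    rw [← norm_toEuclideanLin_sq, ← mul_pow] at hsq
    exact le_of_sq_le_sq hsq (norm_nonneg _)

theorem exists_finrank_eq_norm_le_singVals_mul (M : Matrix (Fin n) (Fin n) ℂ) (i : Fin n) :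
    ∃ U : Submodule ℂ (EuclideanSpace ℂ (Fin n)), Module.finrank ℂ U = n - i ∧
      ∀ y ∈ U, ‖toEuclideanLin M y‖ ≤ singVals M i * ‖y‖ := by
  have hH := isHermitian_conjTranspose_mul_self M
  obtain ⟨p, hp⟩ := exists_perm_singVals_sq M
  let s := (Finset.Ici i).map p.toEmbedding
  have hs : ∀ k ∈ (s : Set (Fin n)), hH.eigenvalues k ≤ singVals M i ^ 2 := by
    intro k hk
    obtain ⟨j, hj, rfl⟩ := Finset.mem_map.mp hk
    rw [Equiv.toEmbedding_apply, ← hp]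
    exact pow_le_pow_left₀ (singVals_nonneg M j) (antitone_singVals M (Finset.mem_Ici.mp hj)) 2
  refine ⟨Submodule.span ℂ (hH.eigenvectorBasis '' s), ?_, fun y hy => ?_⟩
  · rw [hH.eigenvectorBasis.finrank_span_image_finset, Finset.card_map, Fin.card_Ici]
  · have hsq := hH.re_inner_le_mul_norm_sq_of_mem_span hs hy
    rw [← norm_toEuclideanLin_sq, ← mul_pow] at hsq
    exact le_of_sq_le_sq hsq (mul_nonneg (singVals_nonneg M i) (norm_nonneg _))

theorem singVals_mul_mul_le {S B T : Matrix (Fin n) (Fin n) ℂ} {c d : ℝ} (hc : 0 ≤ c)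
    (hS : ∀ y, ‖toEuclideanLin S y‖ ≤ c * ‖y‖)
    (hT : ∀ x, ‖toEuclideanLin T x‖ ≤ d * ‖x‖)
    (hT_inj : Function.Injective (toEuclideanLin T)) (i : Fin n) :
    singVals (S * B * T) i ≤ c * d * singVals B i := by
  obtain ⟨V, hV, hV_le⟩ := exists_finrank_eq_singVals_mul_norm_le (S * B * T) i
  obtain ⟨U, hU, hU_le⟩ := exists_finrank_eq_norm_le_singVals_mul B i
  -- Courant–Fischer: `dim (T V) + dim U = n + 1`, so `T V` and `U` meet.
  have hmeet : ¬ Disjoint (V.map (toEuclideanLin T)) U := fun hdisj => by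
    have := Submodule.finrank_add_finrank_le_of_disjoint hdisj
    rw [← (Submodule.equivMapOfInjective _ hT_inj V).finrank_eq, hV, hU,
      finrank_euclideanSpace_fin] at this
    omega
  obtain ⟨_, ⟨x, hxV, rfl⟩, hxU, hx0⟩ :
      ∃ y ∈ V.map (toEuclideanLin T), y ∈ U ∧ y ≠ 0 := by
    simpa [Submodule.disjoint_def] using hmeet
  have hx : 0 < ‖x‖ := norm_pos_iff.mpr fun h => hx0 (by rw [h, map_zero])
  refine le_of_mul_le_mul_right ?_ hx
  calc singVals (S * B * T) i * ‖x‖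
      ≤ ‖toEuclideanLin S (toEuclideanLin B (toEuclideanLin T x))‖ := by
        simpa using hV_le x hxV
    _ ≤ c * (singVals B i * (d * ‖x‖)) := by
        refine (hS _).trans (mul_le_mul_of_nonneg_left ((hU_le _ hxU).trans ?_) hc)
        exact mul_le_mul_of_nonneg_left (hT x) (singVals_nonneg B i)
    _ = c * d * singVals B i * ‖x‖ := by ring

theorem singVals_mul_mul_self_le {W : Matrix (Fin n) (Fin n) ℂ} (hW : W.PosDef)
    (N : Matrix (Fin n) (Fin n) ℂ) (i : Fin n) :
    singVals (W * N * W) i ≤ eigMax W ^ 2 * singVals N i := by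
  rw [sq]
  exact singVals_mul_mul_le (eigMax_nonneg hW.posSemidef)
    (norm_toEuclideanLin_le_eigMax_mul hW.posSemidef)
    (norm_toEuclideanLin_le_eigMax_mul hW.posSemidef) (injective_toEuclideanLin hW.isUnit) i

theorem singVals_inv_mul_mul_inv_le {W : Matrix (Fin n) (Fin n) ℂ} (hW : W.PosDef)
    (M : Matrix (Fin n) (Fin n) ℂ) (i : Fin n) :
    singVals (W⁻¹ * M * W⁻¹) i ≤ (eigMin W)⁻¹ ^ 2 * singVals M i := by
  rw [sq]
  exact singVals_mul_mul_le (inv_nonneg.mpr (eigMin_nonneg hW.posSemidef))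
    (norm_toEuclideanLin_inv_le hW) (norm_toEuclideanLin_inv_le hW)
    (injective_toEuclideanLin (isUnit_nonsing_inv_iff.mpr hW.isUnit)) i

theorem headFro_le_mul {M N : Matrix (Fin n) (Fin n) ℂ} {t : ℝ} (ht : 0 ≤ t)
    (h : ∀ i, singVals M i ≤ t * singVals N i) (r : ℕ) : headFro M r ≤ t * headFro N r := by
  rw [headFro, headFro, ← Real.sqrt_sq ht, ← Real.sqrt_mul (sq_nonneg _), Finset.mul_sum]
  refine Real.sqrt_le_sqrt (Finset.sum_le_sum fun i _ => ?_)
  split_ifs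
  · rw [← mul_pow]
    exact pow_le_pow_left₀ (singVals_nonneg M i) (h i) 2
  · rw [mul_zero]

theorem tailNuc_le_mul {M N : Matrix (Fin n) (Fin n) ℂ} {t : ℝ}
    (h : ∀ i, singVals M i ≤ t * singVals N i) (r : ℕ) : tailNuc M r ≤ t * tailNuc N r := by
  rw [tailNuc, tailNuc, Finset.mul_sum]
  refine Finset.sum_le_sum fun i _ => ?_
  split_ifs
  · exact h i
  · rw [mul_zero]

end RT

theorem stmt3_general {n m : ℕ} (q : ℝ) (r : ℕ)
    (A : Matrix (Fin n) (Fin n) ℂ → (Fin m → ℝ))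
    (ρ τ : ℝ) (hρ0 : 0 < ρ)
    (hNSP : RT.FrobRobustNSP A q r ρ τ)
    (W : Matrix (Fin n) (Fin n) ℂ) (hW : W.PosDef) :
    RT.FrobRobustNSP (fun X => A (W⁻¹ * X * W⁻¹)) q r
      ((RT.eigMax W / RT.eigMin W) ^ 2 * ρ) ((RT.eigMax W) ^ 2 * τ) := by
  intro M hM
  set N := W⁻¹ * M * W⁻¹
  have hN : N.IsHermitian := by
    simpa only [hW.1.inv.eq] using isHermitian_conjTranspose_mul_mul W⁻¹ hM
  have hdet : IsUnit W.det := (isUnit_iff_isUnit_det W).mp hW.isUnit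
  have hMN : M = W * N * W := by
    simp only [N, ← Matrix.mul_assoc, mul_nonsing_inv _ hdet, Matrix.one_mul]
    rw [Matrix.mul_assoc, nonsing_inv_mul _ hdet, Matrix.mul_one]
  have hhead : RT.headFro M r ≤ RT.eigMax W ^ 2 * RT.headFro N r :=
    RT.headFro_le_mul (sq_nonneg _) (fun i => hMN ▸ RT.singVals_mul_mul_self_le hW N i) r
  have htail : RT.tailNuc N r ≤ (RT.eigMin W)⁻¹ ^ 2 * RT.tailNuc M r :=
    RT.tailNuc_le_mul (RT.singVals_inv_mul_mul_inv_le hW M) r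
  calc RT.headFro M r
      ≤ RT.eigMax W ^ 2 * (ρ / √r * RT.tailNuc N r + τ * RT.lqNorm q (A N)) :=
        hhead.trans (by gcongr; exact hNSP N hN)
    _ ≤ RT.eigMax W ^ 2 * (ρ / √r * ((RT.eigMin W)⁻¹ ^ 2 * RT.tailNuc M r)
          + τ * RT.lqNorm q (A N)) := by gcongr
    _ = (RT.eigMax W / RT.eigMin W) ^ 2 * ρ / √r * RT.tailNuc M r
          + RT.eigMax W ^ 2 * τ * RT.lqNorm q (A N) := by ring

theorem stmt3 {n m : ℕ} (q : ℝ) (hq : 1 ≤ q) (r : ℕ)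
    (A : Matrix (Fin n) (Fin n) ℂ → (Fin m → ℝ))
    (hadd : ∀ X Y, A (X + Y) = A X + A Y)
    (hsmul : ∀ (c : ℝ) (X), A (c • X) = c • A X)
    (ρ τ : ℝ) (hρ0 : 0 < ρ) (hρ1 : ρ < 1) (hτ : 0 < τ)
    (hNSP : RT.FrobRobustNSP A q r ρ τ)
    (W : Matrix (Fin n) (Fin n) ℂ) (hW : W.PosDef) (hWinv : IsUnit W)
    (hκ : (RT.eigMax W / RT.eigMin W) ^ 2 * ρ < 1) :
    RT.FrobRobustNSP (fun X => A (W⁻¹ * X * W⁻¹)) q r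
      ((RT.eigMax W / RT.eigMin W) ^ 2 * ρ) ((RT.eigMax W) ^ 2 * τ) :=
  stmt3_general q r A ρ τ hρ0 hNSP W hW
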